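/- Let ρ be an i-polymatroid on a finite set E with i-dual ρ*, and assume that for every e ∈ E, (1) ρ(E−{e}) = ρ(E) and (2) ρ({e}) = i. Then for every positive integer k there is a bijection from Δ_ρ^k onto Δ_{ρ*}^k; in particular, for every positive integer k the number of k-tuples of matroids decomposing ρ equals the number of k-tuples of matroids decomposing ρ*. -/

import Mathlib

variable {α : Type*}

/-- `ρ` is an (integer) polymatroid on ground set `E`. -/
def IsPolymatroidOn [DecidableEq α] (E : Finset α) (ρ : Finset α → ℤ) : Prop :=
  ρ ∅ = 0 ∧
  (∀ A B : Finset α, A ⊆ B → B ⊆ E → ρ A ≤ ρ B) ∧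
  (∀ A B : Finset α, A ⊆ E → B ⊆ E → ρ (A ∪ B) + ρ (A ∩ B) ≤ ρ A + ρ B)

/-- `r` is the rank function of a matroid on `E` (matroids are exactly the
`1`-polymatroids). -/
def IsMatroidRankOn [DecidableEq α] (E : Finset α) (r : Finset α → ℤ) : Prop :=
  IsPolymatroidOn E r ∧ ∀ e ∈ E, r {e} ≤ 1

/-- `Δ_ρ^k`: the set of `k`-tuples of matroids on `E` whose rank functions sum to `ρ`.
(Matroids on `E` are recorded via their canonical extension `X ↦ r (X ∩ E)`, so that
each matroid on `E` corresponds to exactly one function.) -/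
def Delta [DecidableEq α] (k : ℕ) (E : Finset α) (ρ : Finset α → ℤ) :
    Set (Fin k → Finset α → ℤ) :=
  {M | (∀ i, IsMatroidRankOn E (M i)) ∧ (∀ i X, M i X = M i (X ∩ E)) ∧
    ∀ X ⊆ E, ρ X = ∑ i, M i X}

/-- The `i`-dual of an `i`-polymatroid on `E`. -/
def IDual [DecidableEq α] (i : ℕ) (E : Finset α) (ρ : Finset α → ℤ) :
    Finset α → ℤ :=
  fun X => (i : ℤ) * X.card - ρ E + ρ (E \ X)

/-!
Since `ρ(E - e) = ρ(E)` and the ranks add up, no matroid `M_j` of a decomposition of `ρ` has a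
coloop. Replace each `M_j` by `X ↦ Σ_{e ∈ X} r_j{e} - r_j(E) + r_j(E - X)`, the dual of `M_j`
with its loops deleted and then put back as loops. This is again a matroid, and summing over `j`
gives `i|X| - ρ(E) + ρ(E - X) = ρ*(X)` because `ρ{e} = i`. On coloop-free matroids the operation
is an involution; as `ρ*` satisfies the same two hypotheses as `ρ` and `ρ** = ρ`, the same map
sends `Δ_{ρ*}^k` back to `Δ_ρ^k`.
-/

section LoopDual

variable [DecidableEq α] {E : Finset α}

namespace IsPolymatroidOn

variable {ρ : Finset α → ℤ}

lemma nonneg (hρ : IsPolymatroidOn E ρ) {X : Finset α} (hX : X ⊆ E) : 0 ≤ ρ X := by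
  simpa [hρ.1] using hρ.2.1 ∅ X (Finset.empty_subset X) hX

lemma union_le_add_sum_singleton (hρ : IsPolymatroidOn E ρ) {Y Z : Finset α} (hY : Y ⊆ E)
    (hZ : Z ⊆ E) : ρ (Y ∪ Z) ≤ ρ Y + ∑ e ∈ Z, ρ {e} := by
  induction Z using Finset.induction_on with
  | empty => simp
  | @insert a Z ha ih =>
    rw [Finset.insert_subset_iff] at hZ
    have hYZ : Y ∪ Z ⊆ E := Finset.union_subset hY hZ.2
    have hsubmod := hρ.2.2 (Y ∪ Z) {a} hYZ (Finset.singleton_subset_iff.mpr hZ.1)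
    have hinter := hρ.nonneg (Finset.inter_subset_left.trans hYZ : (Y ∪ Z) ∩ {a} ⊆ E)
    rw [Finset.union_insert, Finset.insert_eq, Finset.union_comm {a}, Finset.sum_insert ha]
    linarith [ih hZ.2]

end IsPolymatroidOn

def loopDual (E : Finset α) (r : Finset α → ℤ) : Finset α → ℤ :=
  fun X => ∑ e ∈ X ∩ E, r {e} - r E + r (E \ X)

variable {r : Finset α → ℤ}

lemma loopDual_of_subset {X : Finset α} (hX : X ⊆ E) :
    loopDual E r X = ∑ e ∈ X, r {e} - r E + r (E \ X) := by
  rw [loopDual, Finset.inter_eq_left.mpr hX]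

lemma loopDual_inter (X : Finset α) : loopDual E r (X ∩ E) = loopDual E r X := by
  rw [loopDual, loopDual, Finset.inter_assoc, Finset.inter_self, Finset.sdiff_inter_self_right]

lemma loopDual_congr {s : Finset α → ℤ} (h : ∀ X ⊆ E, r X = s X) : loopDual E r = loopDual E s := by
  funext X
  rw [loopDual, loopDual, h E subset_rfl, h (E \ X) Finset.sdiff_subset,
    Finset.sum_congr rfl fun e he =>
      h {e} (Finset.singleton_subset_iff.mpr (Finset.mem_inter.mp he).2)]

lemma loopDual_sum {ι : Type*} (s : Finset ι) (M : ι → Finset α → ℤ) (X : Finset α) :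
    loopDual E (fun Y => ∑ j ∈ s, M j Y) X = ∑ j ∈ s, loopDual E (M j) X := by
  simp only [loopDual, Finset.sum_add_distrib, Finset.sum_sub_distrib]
  rw [Finset.sum_comm]

lemma IsPolymatroidOn.loopDual (hr : IsPolymatroidOn E r) : IsPolymatroidOn E (loopDual E r) := by
  refine ⟨by simp [_root_.loopDual], fun A B hAB hBE => ?_, fun A B hAE hBE => ?_⟩
  · have hcompl : r (E \ A) ≤ r (E \ B) + ∑ e ∈ B \ A, r {e} := by
      rw [← Finset.sdiff_union_sdiff_cancel hBE hAB]
      exact hr.union_le_add_sum_singleton Finset.sdiff_subset (Finset.sdiff_subset.trans hBE)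
    have hsplit := Finset.sum_sdiff hAB (f := fun e => r {e})
    rw [loopDual_of_subset (hAB.trans hBE), loopDual_of_subset hBE]
    linarith
  · have hsubmod := hr.2.2 (E \ A) (E \ B) Finset.sdiff_subset Finset.sdiff_subset
    rw [← Finset.sdiff_inter_distrib_right, ← Finset.sdiff_union_distrib] at hsubmod
    have hsums := Finset.sum_union_inter (s₁ := A) (s₂ := B) (f := fun e => r {e})
    rw [loopDual_of_subset hAE, loopDual_of_subset hBE,
      loopDual_of_subset (Finset.union_subset hAE hBE),
      loopDual_of_subset (Finset.inter_subset_left.trans hAE)]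
    linarith

lemma IsMatroidRankOn.loopDual (hr : IsMatroidRankOn E r) : IsMatroidRankOn E (loopDual E r) := by
  refine ⟨hr.1.loopDual, fun e he => ?_⟩
  have hmono := hr.1.2.1 (E \ {e}) E Finset.sdiff_subset subset_rfl
  rw [loopDual_of_subset (Finset.singleton_subset_iff.mpr he), Finset.sum_singleton]
  linarith [hr.2 e he]

lemma loopDual_loopDual (h0 : r ∅ = 0) (hcoloop : ∀ e ∈ E, r (E.erase e) = r E)
    (hext : ∀ X, r (X ∩ E) = r X) : loopDual E (loopDual E r) = r := by
  funext X
  have hsingleton : ∀ e ∈ X ∩ E, loopDual E r {e} = r {e} := fun e he => by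
    have he : e ∈ E := (Finset.mem_inter.mp he).2
    rw [loopDual_of_subset (Finset.singleton_subset_iff.mpr he), Finset.sum_singleton,
      Finset.sdiff_singleton_eq_erase, hcoloop e he, sub_add_cancel]
  have hE : loopDual E r E = ∑ e ∈ E, r {e} - r E := by
    rw [loopDual_of_subset subset_rfl, Finset.sdiff_self, h0, add_zero]
  have hcompl : loopDual E r (E \ X) = ∑ e ∈ E \ X, r {e} - r E + r (X ∩ E) := by
    rw [loopDual_of_subset Finset.sdiff_subset, Finset.sdiff_sdiff_self_left, Finset.inter_comm]
  have hsplit := Finset.sum_sdiff (Finset.inter_subset_right (s₁ := X) (s₂ := E))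
    (f := fun e => r {e})
  rw [Finset.sdiff_inter_self_right] at hsplit
  rw [loopDual, Finset.sum_congr rfl hsingleton, hE, hcompl, hext]
  linarith

end LoopDual

section IDual

variable [DecidableEq α] {E : Finset α} {i : ℕ} {ρ : Finset α → ℤ}

lemma loopDual_eq_iDual (h2 : ∀ e ∈ E, ρ {e} = i) {X : Finset α} (hX : X ⊆ E) :
    loopDual E ρ X = IDual i E ρ X := by
  rw [loopDual_of_subset hX, IDual, Finset.sum_congr rfl fun e he => h2 e (hX he),
    Finset.sum_const, nsmul_eq_mul, mul_comm]

lemma iDual_singleton (h1 : ∀ e ∈ E, ρ (E.erase e) = ρ E) {e : α} (he : e ∈ E) :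
    IDual i E ρ {e} = i := by
  rw [IDual, Finset.sdiff_singleton_eq_erase, h1 e he, Finset.card_singleton]
  ring

lemma iDual_erase (h0 : ρ ∅ = 0) (h2 : ∀ e ∈ E, ρ {e} = i) {e : α} (he : e ∈ E) :
    IDual i E ρ (E.erase e) = IDual i E ρ E := by
  have hcard : ((E.erase e).card : ℤ) + 1 = E.card := by
    exact_mod_cast Finset.card_erase_add_one he
  rw [IDual, IDual, Finset.sdiff_erase_self he, Finset.sdiff_self, h0, h2 e he]
  linear_combination (i : ℤ) * hcard

lemma iDual_iDual (h0 : ρ ∅ = 0) {X : Finset α} (hX : X ⊆ E) :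
    IDual i E (IDual i E ρ) X = ρ X := by
  have hcard : ((E \ X).card : ℤ) + X.card = E.card := by
    exact_mod_cast Finset.card_sdiff_add_card_eq_card hX
  rw [IDual, IDual, IDual, Finset.sdiff_self, Finset.sdiff_sdiff_eq_self hX, h0]
  linear_combination (i : ℤ) * hcard

end IDual

section Delta

variable [DecidableEq α] {k : ℕ} {E : Finset α} {i : ℕ} {ρ : Finset α → ℤ}
  {M : Fin k → Finset α → ℤ}

lemma delta_congr {σ : Finset α → ℤ} (h : ∀ X ⊆ E, ρ X = σ X) : Delta k E ρ = Delta k E σ := by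
  ext M
  refine and_congr_right fun _ => and_congr_right fun _ => forall₂_congr fun X hX => ?_
  rw [h X hX]

lemma delta_iDual_iDual (h0 : ρ ∅ = 0) : Delta k E (IDual i E (IDual i E ρ)) = Delta k E ρ :=
  delta_congr fun _ => iDual_iDual h0

lemma rank_erase_eq_of_mem_delta (h1 : ∀ e ∈ E, ρ (E.erase e) = ρ E) (hM : M ∈ Delta k E ρ)
    (j : Fin k) {e : α} (he : e ∈ E) : M j (E.erase e) = M j E := by
  obtain ⟨hmat, -, hsum⟩ := hM
  have hle : ∀ j ∈ Finset.univ, M j (E.erase e) ≤ M j E := fun j _ =>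
    (hmat j).1.2.1 _ _ (Finset.erase_subset e E) subset_rfl
  refine (Finset.sum_eq_sum_iff_of_le hle).mp ?_ j (Finset.mem_univ j)
  rw [← hsum _ (Finset.erase_subset e E), ← hsum E subset_rfl, h1 e he]

lemma loopDual_mem_delta (h2 : ∀ e ∈ E, ρ {e} = i) (hM : M ∈ Delta k E ρ) :
    (fun j => loopDual E (M j)) ∈ Delta k E (IDual i E ρ) := by
  obtain ⟨hmat, -, hsum⟩ := hM
  refine ⟨fun j => (hmat j).loopDual, fun j X => (loopDual_inter X).symm, fun X hX => ?_⟩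
  rw [← loopDual_eq_iDual h2 hX, loopDual_congr (s := fun Y => ∑ j, M j Y) hsum, loopDual_sum]

lemma loopDual_loopDual_of_mem_delta (h1 : ∀ e ∈ E, ρ (E.erase e) = ρ E)
    (hM : M ∈ Delta k E ρ) : (fun j => loopDual E (loopDual E (M j))) = M :=
  funext fun j => loopDual_loopDual (hM.1 j).1.1 (fun _ => rank_erase_eq_of_mem_delta h1 hM j)
    fun X => (hM.2.1 j X).symm

def loopDualEquiv (h0 : ρ ∅ = 0) (h1 : ∀ e ∈ E, ρ (E.erase e) = ρ E)
    (h2 : ∀ e ∈ E, ρ {e} = i) : Delta k E ρ ≃ Delta k E (IDual i E ρ) where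
  toFun M := ⟨fun j => loopDual E (M.1 j), loopDual_mem_delta h2 M.2⟩
  invFun M := ⟨fun j => loopDual E (M.1 j),
    delta_iDual_iDual h0 ▸ loopDual_mem_delta (fun _ => iDual_singleton h1) M.2⟩
  left_inv M := Subtype.ext (loopDual_loopDual_of_mem_delta h1 M.2)
  right_inv M := Subtype.ext (loopDual_loopDual_of_mem_delta (fun _ => iDual_erase h0 h2) M.2)

end Delta

theorem stmt14_general [DecidableEq α] (E : Finset α) (i : ℕ)
    (ρ : Finset α → ℤ)
    (hρ : IsPolymatroidOn E ρ)
    (h1 : ∀ e ∈ E, ρ (E.erase e) = ρ E)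
    (h2 : ∀ e ∈ E, ρ {e} = (i : ℤ)) :
    ∀ k : ℕ, 0 < k →
      Nonempty (↥(Delta k E ρ) ≃ ↥(Delta k E (IDual i E ρ))) ∧
      (Delta k E ρ).ncard = (Delta k E (IDual i E ρ)).ncard := by
  intro k _
  let φ : Delta k E ρ ≃ Delta k E (IDual i E ρ) := loopDualEquiv hρ.1 h1 h2
  exact ⟨⟨φ⟩, by rw [← Nat.card_coe_set_eq, ← Nat.card_coe_set_eq, Nat.card_congr φ]⟩

theorem stmt14 [DecidableEq α] (E : Finset α) (i : ℕ) (hi : 0 < i)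
    (ρ : Finset α → ℤ)
    (hρ : IsPolymatroidOn E ρ) (hpi : ∀ e ∈ E, ρ {e} ≤ (i : ℤ))
    (h1 : ∀ e ∈ E, ρ (E.erase e) = ρ E)
    (h2 : ∀ e ∈ E, ρ {e} = (i : ℤ)) :
    ∀ k : ℕ, 0 < k →
      Nonempty (↥(Delta k E ρ) ≃ ↥(Delta k E (IDual i E ρ))) ∧
      (Delta k E ρ).ncard = (Delta k E (IDual i E ρ)).ncard :=
  stmt14_general E i ρ hρ h1 h2
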